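/- Let n ≥ 1 and f₁,…,fₙ, g¹, g² : ℝⁿ → ℝ be smooth, and on ℝ^{3n} with coordinates (xⁱ,yⁱ,zⁱ)_{1≤i≤n} set H¹ = Σᵢ fᵢ(z¹,…,zⁿ)xⁱ + g¹(z¹,…,zⁿ) and H² = Σᵢ fᵢ(z¹,…,zⁿ)yⁱ + g²(z¹,…,zⁿ). Then the Nambu dynamical system X_H^N and the Hamiltonian vector field X_H of the canonical 2-symplectic structure on ℝ^{3n} are related by X_H^N = Σᵢ fᵢ(z¹,…,zⁿ)·X_H^i, where X_H^i = X_H(xⁱ)∂/∂xⁱ + X_H(yⁱ)∂/∂yⁱ + X_H(zⁱ)∂/∂zⁱ is the projection of X_H onto the i-th coordinate block. Explicitly: D(H¹,H²)/D(yⁱ,zⁱ) = −(Σⱼ (∂fⱼ/∂zⁱ)xʲ + ∂g¹/∂zⁱ)·fᵢ, D(H¹,H²)/D(zⁱ,xⁱ) = −(Σⱼ (∂fⱼ/∂zⁱ)yʲ + ∂g²/∂zⁱ)·fᵢ, and D(H¹,H²)/D(xⁱ,yⁱ) = fᵢ². -/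

import Mathlib

/-!
STATEMENT 12: On ℝ^{3n} with coordinates (xⁱ,yⁱ,zⁱ), the canonical
2-symplectic structure θ¹ = Σᵢ dxⁱ∧dzⁱ, θ² = Σᵢ dyⁱ∧dzⁱ, and
H¹ = Σᵢ fᵢ(z)xⁱ + g¹(z), H² = Σᵢ fᵢ(z)yⁱ + g²(z), the Nambu dynamical system
X_H^N and the Hamiltonian vector field X_H (with X_H(xⁱ) = −∂H¹/∂zⁱ,
X_H(yⁱ) = −∂H²/∂zⁱ, X_H(zⁱ) = fᵢ(z)) satisfy X_H^N = Σᵢ fᵢ(z)·X_H^i: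
D(H¹,H²)/D(yⁱ,zⁱ) = −(Σⱼ (∂fⱼ/∂zⁱ)xʲ + ∂g¹/∂zⁱ)·fᵢ,
D(H¹,H²)/D(zⁱ,xⁱ) = −(Σⱼ (∂fⱼ/∂zⁱ)yʲ + ∂g²/∂zⁱ)·fᵢ,
D(H¹,H²)/D(xⁱ,yⁱ) = fᵢ².
-/

/-- A point of ℝ^{3n}: (x, y, z). -/
abbrev Pt3 (n : ℕ) := (Fin n → ℝ) × (Fin n → ℝ) × (Fin n → ℝ)

/-- Coordinate direction ∂/∂xⁱ. -/
def dirX (n : ℕ) (i : Fin n) : Pt3 n := (Pi.single i 1, 0, 0)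

/-- Coordinate direction ∂/∂yⁱ. -/
def dirY (n : ℕ) (i : Fin n) : Pt3 n := (0, Pi.single i 1, 0)

/-- Coordinate direction ∂/∂zⁱ. -/
def dirZ (n : ℕ) (i : Fin n) : Pt3 n := (0, 0, Pi.single i 1)

/-- D(F,G)/D(u,v) = ∂F/∂u·∂G/∂v − ∂F/∂v·∂G/∂u for directions u, v. -/
noncomputable def jac2 (n : ℕ) (F G : Pt3 n → ℝ) (u v : Pt3 n) (m : Pt3 n) : ℝ :=
  fderiv ℝ F m u * fderiv ℝ G m v - fderiv ℝ F m v * fderiv ℝ G m u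


noncomputable def projZ (n : ℕ) : Pt3 n →L[ℝ] (Fin n → ℝ) :=
  (ContinuousLinearMap.snd ℝ (Fin n → ℝ) (Fin n → ℝ)).comp
    (ContinuousLinearMap.snd ℝ (Fin n → ℝ) ((Fin n → ℝ) × (Fin n → ℝ)))

noncomputable def projXi (n : ℕ) (i : Fin n) : Pt3 n →L[ℝ] ℝ :=
  (ContinuousLinearMap.proj i).comp
    (ContinuousLinearMap.fst ℝ (Fin n → ℝ) ((Fin n → ℝ) × (Fin n → ℝ)))

noncomputable def lin (n : ℕ) (f : Fin n → (Fin n → ℝ) → ℝ) (g : (Fin n → ℝ) → ℝ)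
    (x z : Fin n → ℝ) : Pt3 n →L[ℝ] ℝ :=
  (∑ j : Fin n, (f j z • projXi n j + x j • ((fderiv ℝ (f j) z).comp (projZ n)))) +
    (fderiv ℝ g z).comp (projZ n)

lemma key (n : ℕ) (f : Fin n → (Fin n → ℝ) → ℝ) (g : (Fin n → ℝ) → ℝ)
    (hf : ∀ i, ContDiff ℝ (⊤ : ℕ∞) (f i)) (hg : ContDiff ℝ (⊤ : ℕ∞) g) (x y z : Fin n → ℝ) :
    HasFDerivAt (fun p : Pt3 n => (∑ j, f j p.2.2 * p.1 j) + g p.2.2)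
      (lin n f g x z) ((x, y, z) : Pt3 n) := by
  have hπ3 : HasFDerivAt (fun p : Pt3 n => p.2.2) (projZ n) (x, y, z) :=
    (projZ n).hasFDerivAt
  have hsum : HasFDerivAt (fun p : Pt3 n => ∑ j, f j p.2.2 * p.1 j)
      (∑ j : Fin n, (f j z • projXi n j + x j • ((fderiv ℝ (f j) z).comp (projZ n))))
      (x, y, z) := by
    apply HasFDerivAt.fun_sum
    intro j _
    have hc : HasFDerivAt (fun p : Pt3 n => f j p.2.2)
        ((fderiv ℝ (f j) z).comp (projZ n)) (x, y, z) :=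
      (((hf j).differentiable (by simp) z).hasFDerivAt).comp _ hπ3
    have hd : HasFDerivAt (fun p : Pt3 n => p.1 j) (projXi n j) (x, y, z) :=
      (projXi n j).hasFDerivAt
    exact hc.mul hd
  have hgc : HasFDerivAt (fun p : Pt3 n => g p.2.2)
      ((fderiv ℝ g z).comp (projZ n)) (x, y, z) :=
    ((hg.differentiable (by simp) z).hasFDerivAt).comp _ hπ3
  exact hsum.add hgc

lemma linX (n : ℕ) (f : Fin n → (Fin n → ℝ) → ℝ) (g : (Fin n → ℝ) → ℝ)
    (x z : Fin n → ℝ) (i : Fin n) : lin n f g x z (dirX n i) = f i z := by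
  simp [lin, dirX, projZ, projXi, ContinuousLinearMap.sum_apply, Pi.single_apply,
    mul_ite, Finset.sum_ite_eq']

lemma linY (n : ℕ) (f : Fin n → (Fin n → ℝ) → ℝ) (g : (Fin n → ℝ) → ℝ)
    (x z : Fin n → ℝ) (i : Fin n) : lin n f g x z (dirY n i) = 0 := by
  simp [lin, dirY, projZ, projXi, ContinuousLinearMap.sum_apply]

lemma linZ (n : ℕ) (f : Fin n → (Fin n → ℝ) → ℝ) (g : (Fin n → ℝ) → ℝ)
    (x z : Fin n → ℝ) (i : Fin n) :
    lin n f g x z (dirZ n i) =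
      (∑ j, x j * fderiv ℝ (f j) z (Pi.single i 1)) + fderiv ℝ g z (Pi.single i 1) := by
  simp [lin, dirZ, projZ, projXi, ContinuousLinearMap.sum_apply, smul_eq_mul]

noncomputable def projYi (n : ℕ) (i : Fin n) : Pt3 n →L[ℝ] ℝ :=
  ((ContinuousLinearMap.proj i).comp
    (ContinuousLinearMap.fst ℝ (Fin n → ℝ) (Fin n → ℝ))).comp
    (ContinuousLinearMap.snd ℝ (Fin n → ℝ) ((Fin n → ℝ) × (Fin n → ℝ)))

noncomputable def lin2 (n : ℕ) (f : Fin n → (Fin n → ℝ) → ℝ) (g : (Fin n → ℝ) → ℝ)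
    (y z : Fin n → ℝ) : Pt3 n →L[ℝ] ℝ :=
  (∑ j : Fin n, (f j z • projYi n j + y j • ((fderiv ℝ (f j) z).comp (projZ n)))) +
    (fderiv ℝ g z).comp (projZ n)

lemma key2 (n : ℕ) (f : Fin n → (Fin n → ℝ) → ℝ) (g : (Fin n → ℝ) → ℝ)
    (hf : ∀ i, ContDiff ℝ (⊤ : ℕ∞) (f i)) (hg : ContDiff ℝ (⊤ : ℕ∞) g) (x y z : Fin n → ℝ) :
    HasFDerivAt (fun p : Pt3 n => (∑ j, f j p.2.2 * p.2.1 j) + g p.2.2)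
      (lin2 n f g y z) ((x, y, z) : Pt3 n) := by
  have hπ3 : HasFDerivAt (fun p : Pt3 n => p.2.2) (projZ n) (x, y, z) :=
    (projZ n).hasFDerivAt
  have hsum : HasFDerivAt (fun p : Pt3 n => ∑ j, f j p.2.2 * p.2.1 j)
      (∑ j : Fin n, (f j z • projYi n j + y j • ((fderiv ℝ (f j) z).comp (projZ n))))
      (x, y, z) := by
    apply HasFDerivAt.fun_sum
    intro j _
    have hc : HasFDerivAt (fun p : Pt3 n => f j p.2.2)
        ((fderiv ℝ (f j) z).comp (projZ n)) (x, y, z) :=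
      (((hf j).differentiable (by simp) z).hasFDerivAt).comp _ hπ3
    have hd : HasFDerivAt (fun p : Pt3 n => p.2.1 j) (projYi n j) (x, y, z) :=
      (projYi n j).hasFDerivAt
    exact hc.mul hd
  have hgc : HasFDerivAt (fun p : Pt3 n => g p.2.2)
      ((fderiv ℝ g z).comp (projZ n)) (x, y, z) :=
    ((hg.differentiable (by simp) z).hasFDerivAt).comp _ hπ3
  exact hsum.add hgc

lemma lin2X (n : ℕ) (f : Fin n → (Fin n → ℝ) → ℝ) (g : (Fin n → ℝ) → ℝ)
    (y z : Fin n → ℝ) (i : Fin n) : lin2 n f g y z (dirX n i) = 0 := by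
  simp [lin2, dirX, projZ, projYi, ContinuousLinearMap.sum_apply]

lemma lin2Y (n : ℕ) (f : Fin n → (Fin n → ℝ) → ℝ) (g : (Fin n → ℝ) → ℝ)
    (y z : Fin n → ℝ) (i : Fin n) : lin2 n f g y z (dirY n i) = f i z := by
  simp [lin2, dirY, projZ, projYi, ContinuousLinearMap.sum_apply, Pi.single_apply,
    mul_ite, Finset.sum_ite_eq']

lemma lin2Z (n : ℕ) (f : Fin n → (Fin n → ℝ) → ℝ) (g : (Fin n → ℝ) → ℝ)
    (y z : Fin n → ℝ) (i : Fin n) :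
    lin2 n f g y z (dirZ n i) =
      (∑ j, y j * fderiv ℝ (f j) z (Pi.single i 1)) + fderiv ℝ g z (Pi.single i 1) := by
  simp [lin2, dirZ, projZ, projYi, ContinuousLinearMap.sum_apply, smul_eq_mul]


theorem nambu_eq_sum_f_smul_hamVF (n : ℕ) (hn : 1 ≤ n)
    (f : Fin n → (Fin n → ℝ) → ℝ) (g1 g2 : (Fin n → ℝ) → ℝ)
    (hf : ∀ i, ContDiff ℝ (⊤ : ℕ∞) (f i)) (hg1 : ContDiff ℝ (⊤ : ℕ∞) g1) (hg2 : ContDiff ℝ (⊤ : ℕ∞) g2)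
    (H1 H2 : Pt3 n → ℝ)
    (hH1 : ∀ x y z : Fin n → ℝ, H1 (x, y, z) = (∑ i, f i z * x i) + g1 z)
    (hH2 : ∀ x y z : Fin n → ℝ, H2 (x, y, z) = (∑ i, f i z * y i) + g2 z) :
    ∀ (x y z : Fin n → ℝ) (i : Fin n),
      -- X_H^N = Σᵢ fᵢ·X_H^i, componentwise (X_H(xⁱ) = −∂H¹/∂zⁱ etc.):
      (jac2 n H1 H2 (dirY n i) (dirZ n i) (x, y, z) =
          f i z * -(fderiv ℝ H1 (x, y, z) (dirZ n i)) ∧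
        jac2 n H1 H2 (dirZ n i) (dirX n i) (x, y, z) =
          f i z * -(fderiv ℝ H2 (x, y, z) (dirZ n i)) ∧
        jac2 n H1 H2 (dirX n i) (dirY n i) (x, y, z) = f i z * f i z) ∧
      -- explicit expressions:
      (jac2 n H1 H2 (dirY n i) (dirZ n i) (x, y, z) =
          -((∑ j, fderiv ℝ (f j) z (Pi.single i 1) * x j) +
              fderiv ℝ g1 z (Pi.single i 1)) * f i z ∧
        jac2 n H1 H2 (dirZ n i) (dirX n i) (x, y, z) =
          -((∑ j, fderiv ℝ (f j) z (Pi.single i 1) * y j) +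
              fderiv ℝ g2 z (Pi.single i 1)) * f i z ∧
        jac2 n H1 H2 (dirX n i) (dirY n i) (x, y, z) = (f i z) ^ 2) := by
  have hH1' : H1 = fun p : Pt3 n => (∑ j, f j p.2.2 * p.1 j) + g1 p.2.2 := by
    funext p; obtain ⟨x, y, z⟩ := p; exact hH1 x y z
  have hH2' : H2 = fun p : Pt3 n => (∑ j, f j p.2.2 * p.2.1 j) + g2 p.2.2 := by
    funext p; obtain ⟨x, y, z⟩ := p; exact hH2 x y z
  subst hH1' hH2'
  intro x y z i
  have h1 : fderiv ℝ (fun p : Pt3 n => (∑ j, f j p.2.2 * p.1 j) + g1 p.2.2) (x, y, z)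
      = lin n f g1 x z := (key n f g1 hf hg1 x y z).fderiv
  have h2 : fderiv ℝ (fun p : Pt3 n => (∑ j, f j p.2.2 * p.2.1 j) + g2 p.2.2) (x, y, z)
      = lin2 n f g2 y z := (key2 n f g2 hf hg2 x y z).fderiv
  simp only [jac2, h1, h2, linX, linY, linZ, lin2X, lin2Y, lin2Z]
  constructor
  · refine ⟨by ring, by ring, by ring⟩
  · refine ⟨by simp only [mul_comm]; ring, by simp only [mul_comm]; ring, by ring⟩
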